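/- If a ≡_r b (mod m) and k is a natural number, then a^k ≡_{(r+b)^k - b^k} b^k (mod m). -/

import Mathlib

/-! `a ≡_r b (mod m)` says exactly that `m ∣ a - (r + b)`, and `a - c ∣ a ^ k - c ^ k`. -/

def RCong (m r a b : ℤ) : Prop := ∃ q : ℤ, a - b = m * q + r

theorem rcong_iff_dvd {m r a b : ℤ} : RCong m r a b ↔ m ∣ a - (r + b) :=
  ⟨fun ⟨q, hq⟩ => ⟨q, by linarith⟩, fun ⟨q, hq⟩ => ⟨q, by linarith⟩⟩

theorem rcong_pow_general (a b r m : ℤ) (k : ℕ)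
    (h : RCong m r a b) : RCong m ((r + b) ^ k - b ^ k) (a ^ k) (b ^ k) := by
  rw [rcong_iff_dvd] at h ⊢
  rw [sub_add_cancel]
  exact h.trans (sub_dvd_pow_sub_pow a (r + b) k)

theorem rcong_pow (a b r m : ℤ) (hm : m ≠ 0) (k : ℕ)
    (h : RCong m r a b) : RCong m ((r + b) ^ k - b ^ k) (a ^ k) (b ^ k) :=
  rcong_pow_general a b r m k h
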